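/- Fix constants c_+ , c_− > 0, and let φ₀ ∈ (π/3, π/2), φ ∈ (0, φ₀ − π/3), κ ≥ 1. For λ ∈ Σ_{π−φ₀}, z ∈ Σ_φ, δ ∈ [0, δ*], σ ∈ [0, σ*] define ω_±(λ,z) = √(λ+κ+c_± z), f₁ = (λ+κ)[δ(√c₊ ω₊ + √c₋ ω₋) + 1], and f₂ = σ z (√c₊ ω₊ + √c₋ ω₋) + a₊ √c₊ ω₊ + a₋ √c₋ ω₋, where a_± ≥ c₀ > 0. Then there exists ε > 0, independent of all parameters, such that arg(f₂/f₁) ∈ (−π + ε, π − ε) whenever arg λ ≥ 0, and symmetrically arg(f₂/f₁) ∈ (−π + ε, π − ε) when arg λ ≤ 0. In particular −1 ∉ closure of the image of f₂/f₁. -/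

import Mathlib

/-!
Closed sectors `{0} ∪ {w | arg w ∈ [a, b]}` are stable under multiplication by nonnegative reals
and, when of opening at most `π`, under addition; products, inverses and the principal square root
act on them by adding, negating and halving the angle bounds. Hence, with `β = π - φ₀`,
`0 ≤ arg λ ≤ β` and `|arg z| ≤ φ`, `f₁` lies in the sector `[-φ/2, 3β/2]` and `f₂` in
`[-3φ/2, φ + β/2]`, so `|arg (f₂/f₁)| ≤ 3(φ + β)/2 < π`; the case `arg λ < 0` follows by complex
conjugation. A sector `|arg w| ≤ θ` with `θ < π` is a closed set avoiding `-1`.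
-/

open Real

noncomputable def omegaPM (cpm κ : ℝ) (l z : ℂ) : ℂ :=
  (l + (κ : ℂ) + (cpm : ℂ) * z) ^ ((1 : ℂ) / 2)

/-- `f₁ = (λ+κ)[δ(√c₊ω₊ + √c₋ω₋) + 1]`. -/
noncomputable def stefanF1 (cP cM κ δ : ℝ) (l z : ℂ) : ℂ :=
  (l + (κ : ℂ)) * ((δ : ℂ) * ((Real.sqrt cP : ℂ) * omegaPM cP κ l z
    + (Real.sqrt cM : ℂ) * omegaPM cM κ l z) + 1)

/-- `f₂ = σz(√c₊ω₊ + √c₋ω₋) + a₊√c₊ω₊ + a₋√c₋ω₋`. -/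
noncomputable def stefanF2 (cP cM κ σ aP aM : ℝ) (l z : ℂ) : ℂ :=
  (σ : ℂ) * z * ((Real.sqrt cP : ℂ) * omegaPM cP κ l z
    + (Real.sqrt cM : ℂ) * omegaPM cM κ l z)
  + (aP : ℂ) * (Real.sqrt cP : ℂ) * omegaPM cP κ l z
  + (aM : ℂ) * (Real.sqrt cM : ℂ) * omegaPM cM κ l z

namespace Complex

open Set ComplexConjugate

def closedSector (a b : ℝ) : Set ℂ := {w | w = 0 ∨ w.arg ∈ Icc a b}

variable {a b a' b' : ℝ} {w w₁ w₂ : ℂ}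

lemma closedSector_subset_closedSector (ha : a' ≤ a) (hb : b ≤ b') :
    closedSector a b ⊆ closedSector a' b' :=
  fun _ hw => hw.imp_right fun h => ⟨ha.trans h.1, h.2.trans hb⟩

lemma arg_ne_pi_of_mem_closedSector (hb : b < π) (hw : w ∈ closedSector a b) : w.arg ≠ π := by
  rcases hw with rfl | hw
  · simpa using pi_pos.ne
  · exact (hw.2.trans_lt hb).ne

lemma ofReal_mem_closedSector {r : ℝ} (hr : 0 ≤ r) (ha : a ≤ 0) (hb : 0 ≤ b) :
    (r : ℂ) ∈ closedSector a b :=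
  Or.inr (by rw [arg_ofReal_of_nonneg hr]; exact ⟨ha, hb⟩)

lemma ofReal_mul_mem_closedSector {r : ℝ} (hr : 0 ≤ r) (hw : w ∈ closedSector a b) :
    (r : ℂ) * w ∈ closedSector a b := by
  rcases hr.eq_or_lt with rfl | hr
  · exact Or.inl (by simp)
  · rcases hw with rfl | hw
    · exact Or.inl (mul_zero _)
    · exact Or.inr (by rwa [arg_real_mul _ hr])

lemma exp_mul_I_mem_closedSector {θ : ℝ} (hθ : θ ∈ Ioc (-π) π) :
    exp (θ * I) ∈ closedSector θ θ := by
  refine Or.inr ?_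
  rw [arg_exp_mul_I, (toIocMod_eq_self _).2 (by rwa [show -π + 2 * π = π by ring])]
  exact left_mem_Icc.2 le_rfl

lemma mul_mem_closedSector {a₁ b₁ a₂ b₂ : ℝ} (ha : -π < a₁ + a₂) (hb : b₁ + b₂ ≤ π)
    (h₁ : w₁ ∈ closedSector a₁ b₁) (h₂ : w₂ ∈ closedSector a₂ b₂) :
    w₁ * w₂ ∈ closedSector (a₁ + a₂) (b₁ + b₂) := by
  rcases eq_or_ne w₁ 0 with rfl | hw₁
  · exact Or.inl (zero_mul _)
  rcases eq_or_ne w₂ 0 with rfl | hw₂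
  · exact Or.inl (mul_zero _)
  obtain ⟨ha₁, hb₁⟩ := h₁.resolve_left hw₁
  obtain ⟨ha₂, hb₂⟩ := h₂.resolve_left hw₂
  refine Or.inr ?_
  rw [arg_mul hw₁ hw₂ ⟨by linarith, by linarith⟩]
  exact ⟨by linarith, by linarith⟩

lemma inv_mem_closedSector (hb : b < π) (hw : w ∈ closedSector a b) :
    w⁻¹ ∈ closedSector (-b) (-a) := by
  rcases hw with rfl | ⟨ha, hb'⟩
  · exact Or.inl inv_zero
  · refine Or.inr ?_
    rw [arg_inv, if_neg (hb'.trans_lt hb).ne]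
    exact ⟨neg_le_neg hb', neg_le_neg ha⟩

lemma div_mem_closedSector {a₁ b₁ a₂ b₂ : ℝ} (ha : -π < a₁ - b₂) (hb : b₁ - a₂ ≤ π)
    (hb₂ : b₂ < π) (h₁ : w₁ ∈ closedSector a₁ b₁) (h₂ : w₂ ∈ closedSector a₂ b₂) :
    w₁ / w₂ ∈ closedSector (a₁ - b₂) (b₁ - a₂) :=
  div_eq_mul_inv w₁ w₂ ▸ mul_mem_closedSector ha hb h₁ (inv_mem_closedSector hb₂ h₂)

lemma arg_cpow_ofReal {t : ℝ} (ht₀ : 0 ≤ t) (ht₁ : t ≤ 1) (hw : w ≠ 0) :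
    arg (w ^ (t : ℂ)) = t * arg w := by
  have hmem : t * arg w ∈ Ioc (-π) (-π + 2 * π) := by
    constructor <;> nlinarith [neg_pi_lt_arg w, arg_le_pi w, pi_pos]
  rw [cpow_def_of_ne_zero hw, arg_exp, mul_comm (log w), im_ofReal_mul, log_im,
    (toIocMod_eq_self _).2 hmem]

lemma cpow_ofReal_mem_closedSector {t : ℝ} (ht₀ : 0 < t) (ht₁ : t ≤ 1)
    (hw : w ∈ closedSector a b) : w ^ (t : ℂ) ∈ closedSector (t * a) (t * b) := by
  rcases eq_or_ne w 0 with rfl | hw₀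
  · exact Or.inl (zero_cpow (ofReal_ne_zero.2 ht₀.ne'))
  obtain ⟨ha, hb⟩ := hw.resolve_left hw₀
  refine Or.inr ?_
  rw [arg_cpow_ofReal ht₀.le ht₁ hw₀]
  exact ⟨mul_le_mul_of_nonneg_left ha ht₀.le, mul_le_mul_of_nonneg_left hb ht₀.le⟩

lemma abs_arg_conj (w : ℂ) : |(conj w).arg| = |w.arg| := by
  rw [arg_conj]
  split_ifs with h
  · rw [h]
  · exact abs_neg _

lemma abs_arg_le_iff {c : ℝ} (hc₀ : 0 < c) (hcπ : c ≤ π) :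
    |w.arg| ≤ c ↔ Real.cos c * |w.im| ≤ Real.sin c * w.re := by
  have hre : w.re = ‖w‖ * Real.cos |w.arg| := by rw [Real.cos_abs, norm_mul_cos_arg]
  have him : |w.im| = ‖w‖ * Real.sin |w.arg| := by
    rw [← abs_sin_eq_sin_abs_of_abs_le_pi (abs_arg_le_pi w), ← abs_norm, ← abs_mul,
      norm_mul_sin_arg]
  have key : Real.sin c * w.re - Real.cos c * |w.im| = ‖w‖ * Real.sin (c - |w.arg|) := by
    rw [Real.sin_sub, hre, him]; ring
  have hθ := abs_arg_le_pi w
  rw [← sub_nonneg (a := Real.sin c * w.re), key]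
  constructor
  · intro h
    exact mul_nonneg (norm_nonneg w)
      (sin_nonneg_of_nonneg_of_le_pi (by linarith) (by linarith [abs_nonneg w.arg]))
  · intro h
    by_contra! hlt
    have hw : w ≠ 0 := by rintro rfl; simp at hlt; linarith
    have := sin_neg_of_neg_of_neg_pi_lt (x := c - |w.arg|) (by linarith) (by linarith)
    nlinarith [norm_pos_iff.2 hw]

lemma mem_closedSector_neg_iff {c : ℝ} (hc : 0 ≤ c) :
    w ∈ closedSector (-c) c ↔ |w.arg| ≤ c := by
  rw [abs_le]
  refine ⟨?_, Or.inr⟩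
  rintro (rfl | h)
  · simpa using hc
  · exact h

lemma add_mem_closedSector_neg {c : ℝ} (hc₀ : 0 < c) (hc : c ≤ π / 2)
    (h₁ : w₁ ∈ closedSector (-c) c) (h₂ : w₂ ∈ closedSector (-c) c) :
    w₁ + w₂ ∈ closedSector (-c) c := by
  have hcπ : c ≤ π := by linarith [pi_pos]
  rw [mem_closedSector_neg_iff hc₀.le, abs_arg_le_iff hc₀ hcπ] at h₁ h₂ ⊢
  have hcos : 0 ≤ Real.cos c := cos_nonneg_of_mem_Icc ⟨by linarith, hc⟩
  calc Real.cos c * |(w₁ + w₂).im| ≤ Real.cos c * (|w₁.im| + |w₂.im|) :=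
        mul_le_mul_of_nonneg_left (by rw [add_im]; exact abs_add_le _ _) hcos
    _ ≤ Real.sin c * (w₁ + w₂).re := by rw [add_re]; linarith

lemma add_mem_closedSector (hab : a < b) (hba : b - a ≤ π) (ha : -π < a) (hb : b ≤ π)
    (h₁ : w₁ ∈ closedSector a b) (h₂ : w₂ ∈ closedSector a b) :
    w₁ + w₂ ∈ closedSector a b := by
  set m := (a + b) / 2 with hm
  set c := (b - a) / 2 with hc
  -- rotated by `-m`, the sector becomes `[-c, c]`, a convex cone
  have hrot : ∀ w ∈ closedSector a b, exp ((-m : ℝ) * I) * w ∈ closedSector (-c) c := by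
    intro w hw
    have := mul_mem_closedSector (by linarith) (by linarith)
      (exp_mul_I_mem_closedSector (θ := -m) ⟨by linarith, by linarith⟩) hw
    rwa [show -m + a = -c by ring, show -m + b = c by ring] at this
  have hsum := add_mem_closedSector_neg (by linarith) (by linarith) (hrot w₁ h₁) (hrot w₂ h₂)
  have := mul_mem_closedSector (by linarith) (by linarith)
    (exp_mul_I_mem_closedSector (θ := m) ⟨by linarith, by linarith⟩) hsum
  rwa [← mul_add, ← mul_assoc, ← exp_add, ← add_mul, ← ofReal_add, add_neg_cancel, ofReal_zero,
    zero_mul, exp_zero, one_mul, show m + -c = a by ring, show m + c = b by ring] at this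

lemma neg_one_notMem_closure_of_abs_arg_le {s : Set ℂ} {θ : ℝ} (hθ₀ : 0 < θ) (hθ : θ < π)
    (hs : ∀ w ∈ s, |w.arg| ≤ θ) : (-1 : ℂ) ∉ closure s := by
  have hcone : IsClosed {w : ℂ | Real.cos θ * |w.im| ≤ Real.sin θ * w.re} :=
    isClosed_le (by fun_prop) (by fun_prop)
  intro h
  have : Real.cos θ * |(-1 : ℂ).im| ≤ Real.sin θ * (-1 : ℂ).re :=
    closure_minimal (fun w hw => (abs_arg_le_iff hθ₀ hθ.le).1 (hs w hw)) hcone h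
  norm_num at this
  linarith [sin_pos_of_pos_of_lt_pi hθ₀ hθ]

end Complex

section Stefan

open Complex ComplexConjugate

variable {cP cM c κ δ σ aP aM β φ : ℝ} {l z : ℂ}

lemma omegaPM_radicand_mem_closedSector (hc : 0 ≤ c) (hκ : 0 ≤ κ) (hφ : 0 < φ) (hφβ : φ ≤ β)
    (hβφ : β + φ ≤ π) (hl : l ∈ closedSector 0 β) (hz : z ∈ closedSector (-φ) φ) :
    l + κ + c * z ∈ closedSector (-φ) β := by
  have hlκ : l + κ ∈ closedSector 0 β := add_mem_closedSector (by linarith) (by linarith)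
    (by linarith) (by linarith) hl (ofReal_mem_closedSector hκ le_rfl (by linarith))
  exact add_mem_closedSector (by linarith) (by linarith) (by linarith) (by linarith)
    (closedSector_subset_closedSector (by linarith) le_rfl hlκ)
    (closedSector_subset_closedSector le_rfl (by linarith) (ofReal_mul_mem_closedSector hc hz))

lemma sqrt_mul_omegaPM_mem_closedSector (hc : 0 ≤ c) (hκ : 0 ≤ κ) (hφ : 0 < φ) (hφβ : φ ≤ β)
    (hβφ : β + φ ≤ π) (hl : l ∈ closedSector 0 β) (hz : z ∈ closedSector (-φ) φ) :
    (Real.sqrt c : ℂ) * omegaPM c κ l z ∈ closedSector (-(φ / 2)) (β / 2) := by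
  have h := cpow_ofReal_mem_closedSector (t := 1 / 2) (by norm_num) (by norm_num)
    (omegaPM_radicand_mem_closedSector hc hκ hφ hφβ hβφ hl hz)
  refine ofReal_mul_mem_closedSector (Real.sqrt_nonneg c) ?_
  rw [omegaPM]
  convert h using 2 <;> push_cast <;> ring

lemma sqrt_mul_omegaPM_add_mem_closedSector (hcP : 0 ≤ cP) (hcM : 0 ≤ cM) (hκ : 0 ≤ κ)
    (hφ : 0 < φ) (hφβ : φ ≤ β) (hβφ : β + φ ≤ π) (hl : l ∈ closedSector 0 β)
    (hz : z ∈ closedSector (-φ) φ) :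
    (Real.sqrt cP : ℂ) * omegaPM cP κ l z + (Real.sqrt cM : ℂ) * omegaPM cM κ l z
      ∈ closedSector (-(φ / 2)) (β / 2) :=
  add_mem_closedSector (by linarith) (by linarith) (by linarith) (by linarith)
    (sqrt_mul_omegaPM_mem_closedSector hcP hκ hφ hφβ hβφ hl hz)
    (sqrt_mul_omegaPM_mem_closedSector hcM hκ hφ hφβ hβφ hl hz)

lemma stefanF1_mem_closedSector (hcP : 0 ≤ cP) (hcM : 0 ≤ cM) (hκ : 0 ≤ κ) (hδ : 0 ≤ δ)
    (hφ : 0 < φ) (hφβ : φ ≤ β) (hφβπ : 3 * (φ + β) < 2 * π)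
    (hl : l ∈ closedSector 0 β) (hz : z ∈ closedSector (-φ) φ) :
    stefanF1 cP cM κ δ l z ∈ closedSector (-(φ / 2)) (3 / 2 * β) := by
  have hS := sqrt_mul_omegaPM_add_mem_closedSector hcP hcM hκ hφ hφβ (by linarith) hl hz
  have hlκ : l + κ ∈ closedSector 0 β := add_mem_closedSector (by linarith) (by linarith)
    (by linarith) (by linarith) hl (ofReal_mem_closedSector hκ le_rfl (by linarith))
  have hD := add_mem_closedSector (by linarith) (by linarith) (by linarith) (by linarith)
    (ofReal_mul_mem_closedSector hδ hS)
    (ofReal_mem_closedSector zero_le_one (by linarith) (by linarith))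
  have := mul_mem_closedSector (by linarith) (by linarith) hlκ hD
  rw [zero_add, show β + β / 2 = 3 / 2 * β by ring] at this
  simpa only [stefanF1, ofReal_one] using this

lemma stefanF2_mem_closedSector (hcP : 0 ≤ cP) (hcM : 0 ≤ cM) (hκ : 0 ≤ κ) (hσ : 0 ≤ σ)
    (haP : 0 ≤ aP) (haM : 0 ≤ aM) (hφ : 0 < φ) (hφβ : φ ≤ β) (hφβπ : 3 * (φ + β) < 2 * π)
    (hl : l ∈ closedSector 0 β) (hz : z ∈ closedSector (-φ) φ) :
    stefanF2 cP cM κ σ aP aM l z ∈ closedSector (-(3 / 2 * φ)) (φ + β / 2) := by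
  have hS := sqrt_mul_omegaPM_add_mem_closedSector hcP hcM hκ hφ hφβ (by linarith) hl hz
  have hσzS := mul_mem_closedSector (by linarith) (by linarith)
    (ofReal_mul_mem_closedSector hσ hz) hS
  have hterm : ∀ {c a : ℝ}, 0 ≤ c → 0 ≤ a →
      (a : ℂ) * (Real.sqrt c : ℂ) * omegaPM c κ l z ∈ closedSector (-(3 / 2 * φ)) (φ + β / 2) :=
    fun hc ha => mul_assoc (_ : ℂ) _ _ ▸ closedSector_subset_closedSector (by linarith)
      (by linarith) (ofReal_mul_mem_closedSector ha
        (sqrt_mul_omegaPM_mem_closedSector hc hκ hφ hφβ (by linarith) hl hz))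
  rw [show -φ + -(φ / 2) = -(3 / 2 * φ) by ring] at hσzS
  exact add_mem_closedSector (by linarith) (by linarith) (by linarith) (by linarith)
    (add_mem_closedSector (by linarith) (by linarith) (by linarith) (by linarith)
      hσzS (hterm hcP haP)) (hterm hcM haM)

lemma stefanF2_div_stefanF1_mem_closedSector (hcP : 0 ≤ cP) (hcM : 0 ≤ cM) (hκ : 0 ≤ κ)
    (hδ : 0 ≤ δ) (hσ : 0 ≤ σ) (haP : 0 ≤ aP) (haM : 0 ≤ aM) (hφ : 0 < φ) (hφβ : φ ≤ β)
    (hφβπ : 3 * (φ + β) < 2 * π) (hl : l ∈ closedSector 0 β) (hz : z ∈ closedSector (-φ) φ) :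
    stefanF2 cP cM κ σ aP aM l z / stefanF1 cP cM κ δ l z
      ∈ closedSector (-(3 / 2 * (φ + β))) (3 / 2 * (φ + β)) :=
  closedSector_subset_closedSector (by linarith) (by linarith) <|
    div_mem_closedSector (by linarith) (by linarith) (by linarith)
      (stefanF2_mem_closedSector hcP hcM hκ hσ haP haM hφ hφβ hφβπ hl hz)
      (stefanF1_mem_closedSector hcP hcM hκ hδ hφ hφβ hφβπ hl hz)

lemma omegaPM_conj (h : (l + κ + c * z).arg ≠ π) :
    omegaPM c κ (conj l) (conj z) = conj (omegaPM c κ l z) := by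
  have hhalf : conj ((1 : ℂ) / 2) = 1 / 2 := by simp [map_ofNat]
  rw [omegaPM, omegaPM, ← hhalf, ← conj_cpow _ _ h, hhalf]
  simp only [map_add, map_mul, conj_ofReal]

lemma stefanF1_conj (hP : (l + κ + cP * z).arg ≠ π) (hM : (l + κ + cM * z).arg ≠ π) :
    stefanF1 cP cM κ δ (conj l) (conj z) = conj (stefanF1 cP cM κ δ l z) := by
  simp only [stefanF1, omegaPM_conj hP, omegaPM_conj hM, map_add, map_mul, map_one, conj_ofReal]

lemma stefanF2_conj (hP : (l + κ + cP * z).arg ≠ π) (hM : (l + κ + cM * z).arg ≠ π) :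
    stefanF2 cP cM κ σ aP aM (conj l) (conj z) = conj (stefanF2 cP cM κ σ aP aM l z) := by
  simp only [stefanF2, omegaPM_conj hP, omegaPM_conj hM, map_add, map_mul, conj_ofReal]

lemma abs_arg_stefanF2_div_stefanF1_le (hcP : 0 ≤ cP) (hcM : 0 ≤ cM) (hκ : 0 ≤ κ)
    (hδ : 0 ≤ δ) (hσ : 0 ≤ σ) (haP : 0 ≤ aP) (haM : 0 ≤ aM) (hφ : 0 < φ) (hφβ : φ ≤ β)
    (hφβπ : 3 * (φ + β) < 2 * π) (hl : |l.arg| ≤ β) (hz : |z.arg| ≤ φ) :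
    |(stefanF2 cP cM κ σ aP aM l z / stefanF1 cP cM κ δ l z).arg| ≤ 3 / 2 * (φ + β) := by
  have hθ : 0 ≤ 3 / 2 * (φ + β) := by linarith
  rcases le_or_gt 0 l.arg with hl₀ | hl₀
  · exact (mem_closedSector_neg_iff hθ).1 <| stefanF2_div_stefanF1_mem_closedSector hcP hcM hκ
      hδ hσ haP haM hφ hφβ hφβπ (Or.inr ⟨hl₀, (abs_le.1 hl).2⟩)
      ((mem_closedSector_neg_iff hφ.le).2 hz)
  -- in the lower half plane, conjugate back to the upper one
  obtain ⟨l, rfl⟩ : ∃ l', l = conj l' := ⟨conj l, (conj_conj l).symm⟩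
  obtain ⟨z, rfl⟩ : ∃ z', z = conj z' := ⟨conj z, (conj_conj z).symm⟩
  have hl' : l ∈ closedSector 0 β := by
    rw [arg_conj] at hl hl₀
    split_ifs at hl hl₀
    · linarith [pi_pos]
    · rw [abs_neg] at hl
      exact Or.inr ⟨by linarith, (le_abs_self _).trans hl⟩
  have hz' : z ∈ closedSector (-φ) φ := (mem_closedSector_neg_iff hφ.le).2 (abs_arg_conj z ▸ hz)
  have hbase : ∀ {c : ℝ}, 0 ≤ c → (l + κ + c * z).arg ≠ π := fun hc =>
    arg_ne_pi_of_mem_closedSector (by linarith)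
      (omegaPM_radicand_mem_closedSector hc hκ hφ hφβ (by linarith) hl' hz')
  rw [stefanF1_conj (hbase hcP) (hbase hcM), stefanF2_conj (hbase hcP) (hbase hcM), ← map_div₀,
    abs_arg_conj]
  exact (mem_closedSector_neg_iff hθ).1 <| stefanF2_div_stefanF1_mem_closedSector hcP hcM hκ
    hδ hσ haP haM hφ hφβ hφβπ hl' hz'

end Stefan

theorem stmt3 (cP cM c₀ δs σs φ₀ φ : ℝ)
    (hcP : 0 < cP) (hcM : 0 < cM) (hc₀ : 0 < c₀)
    (hφ₀ : φ₀ ∈ Set.Ioo (π / 3) (π / 2)) (hφ : φ ∈ Set.Ioo 0 (φ₀ - π / 3))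
    (aP aM : ℝ × ℝ → ℝ)
    (haP : ∀ μ ∈ Set.Icc (0 : ℝ) δs ×ˢ Set.Icc (0 : ℝ) σs, c₀ ≤ aP μ)
    (haM : ∀ μ ∈ Set.Icc (0 : ℝ) δs ×ˢ Set.Icc (0 : ℝ) σs, c₀ ≤ aM μ) :
    ∃ ε > (0 : ℝ),
      (∀ (l z : ℂ) (δ σ κ : ℝ), 1 ≤ κ →
        δ ∈ Set.Icc (0 : ℝ) δs → σ ∈ Set.Icc (0 : ℝ) σs →
        l ≠ 0 → |l.arg| < π - φ₀ → z ≠ 0 → |z.arg| < φ →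
        |(stefanF2 cP cM κ σ (aP (δ, σ)) (aM (δ, σ)) l z
            / stefanF1 cP cM κ δ l z).arg| < π - ε) ∧
      (-1 : ℂ) ∉ closure { w : ℂ | ∃ (l z : ℂ) (δ σ κ : ℝ), 1 ≤ κ ∧
        δ ∈ Set.Icc (0 : ℝ) δs ∧ σ ∈ Set.Icc (0 : ℝ) σs ∧
        l ≠ 0 ∧ |l.arg| < π - φ₀ ∧ z ≠ 0 ∧ |z.arg| < φ ∧
        w = stefanF2 cP cM κ σ (aP (δ, σ)) (aM (δ, σ)) l z
            / stefanF1 cP cM κ δ l z } := by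
  set θ := 3 / 2 * (φ + (π - φ₀)) with hθ
  have hθ₀ : 0 < θ := by linarith [hφ.1, hφ₀.2, pi_pos]
  have hθπ : θ < π := by linarith [hφ.2]
  have hbound : ∀ (l z : ℂ) (δ σ κ : ℝ), 1 ≤ κ → δ ∈ Set.Icc (0 : ℝ) δs →
      σ ∈ Set.Icc (0 : ℝ) σs → |l.arg| < π - φ₀ → |z.arg| < φ →
      |(stefanF2 cP cM κ σ (aP (δ, σ)) (aM (δ, σ)) l z / stefanF1 cP cM κ δ l z).arg| ≤ θ :=
    fun l z δ σ κ hκ hδ hσ hl hz =>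
      abs_arg_stefanF2_div_stefanF1_le hcP.le hcM.le (by linarith) hδ.1 hσ.1
        (hc₀.le.trans (haP _ ⟨hδ, hσ⟩)) (hc₀.le.trans (haM _ ⟨hδ, hσ⟩)) hφ.1
        (by linarith [hφ.2, hφ₀.2]) (by linarith [hφ.2]) hl.le hz.le
  refine ⟨(π - θ) / 2, by linarith, fun l z δ σ κ hκ hδ hσ _ hl _ hz => ?_, ?_⟩
  · linarith [hbound l z δ σ κ hκ hδ hσ hl hz]
  · refine Complex.neg_one_notMem_closure_of_abs_arg_le hθ₀ hθπ ?_
    rintro _ ⟨l, z, δ, σ, κ, hκ, hδ, hσ, -, hl, -, hz, rfl⟩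
    exact hbound l z δ σ κ hκ hδ hσ hl hz
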